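/- On ℝ^{(p+p+r+r)×p} with coordinates X₀, X₁ ∈ ℝ^{p×p} and X₂, X₃ ∈ ℝ^{r×p}, set A = X₀ − X₁, B = X₀ + X₁, W = X₂ + iX₃, and define the operators τ(φ) = −4 Σ_{k,l=1}^{p} ∂²φ/∂a_{kl}∂b_{kl} + 4 Σ_{k=1}^{r} Σ_{l=1}^{p} ∂²φ/∂w_{kl}∂w̄_{kl} and the corresponding bilinear κ. Let M̂ be a complex (p+r)×(p+r) matrix in the complexification of 𝔰𝔬(p,r) (i.e. M̂ᵗ I_{pr} + I_{pr} M̂ = 0 where I_{pr} = diag(−I_p, I_r)). Then the components of the map Φ̂(X) = (A; W) + M̂ · (B; W̄) satisfy τ(φ) = 0 and κ(φ, ψ) = 0 for all components φ, ψ of Φ̂. -/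

import Mathlib

/-! Φ̂ is ℝ-linear in `X`, so the first partial derivatives of its components are constant and
the second-order operator `τ` kills them. The derivatives of `Φ̂_{ij}` along
`a_{kl}, b_{kl}, w_{kl}, w̄_{kl}` are `δ_{i,k} δ_{jl}`, `M̂_{i,k} δ_{jl}`, `δ_{i,p+k} δ_{jl}` and
`M̂_{i,p+k} δ_{jl}`; substituting them gives
`κ(Φ̂_{ij}, Φ̂_{i'j'}) = 2 δ_{jj'} (M̂ I_{pr} + I_{pr} M̂ᵗ)_{ii'}`. Since `I_{pr}² = 1`, this matrix is
`I_{pr} (M̂ᵗ I_{pr} + I_{pr} M̂) I_{pr} = 0`. -/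

open Matrix Complex

noncomputable section

/-- `ℝ^{(p+p+r+r)×p}` with blocks `X₀, X₁ ∈ ℝ^{p×p}` and `X₂, X₃ ∈ ℝ^{r×p}`. -/
abbrev RSpace (p r : ℕ) :=
  (Fin p → Fin p → ℝ) × (Fin p → Fin p → ℝ) × (Fin r → Fin p → ℝ) × (Fin r → Fin p → ℝ)

def bR (n p : ℕ) (k : Fin n) (l : Fin p) : Fin n → Fin p → ℝ :=
  fun a b => if a = k ∧ b = l then 1 else 0

/-- unit direction in the `X₀` block. -/
def e0 (p r : ℕ) (k l : Fin p) : RSpace p r := (bR p p k l, 0, 0, 0)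
def e1 (p r : ℕ) (k l : Fin p) : RSpace p r := (0, bR p p k l, 0, 0)
def e2 (p r : ℕ) (k : Fin r) (l : Fin p) : RSpace p r := (0, 0, bR r p k l, 0)
def e3 (p r : ℕ) (k : Fin r) (l : Fin p) : RSpace p r := (0, 0, 0, bR r p k l)

/-- `∂/∂a_{kl}` where `A = X₀ − X₁`. -/
def da (p r : ℕ) (f : RSpace p r → ℂ) (x : RSpace p r) (k l : Fin p) : ℂ :=
  (fderiv ℝ f x (e0 p r k l) - fderiv ℝ f x (e1 p r k l)) / 2

/-- `∂/∂b_{kl}` where `B = X₀ + X₁`. -/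
def db (p r : ℕ) (f : RSpace p r → ℂ) (x : RSpace p r) (k l : Fin p) : ℂ :=
  (fderiv ℝ f x (e0 p r k l) + fderiv ℝ f x (e1 p r k l)) / 2

/-- `∂/∂w_{kl}` where `W = X₂ + iX₃`. -/
def dw (p r : ℕ) (f : RSpace p r → ℂ) (x : RSpace p r) (k : Fin r) (l : Fin p) : ℂ :=
  (fderiv ℝ f x (e2 p r k l) - Complex.I * fderiv ℝ f x (e3 p r k l)) / 2

/-- `∂/∂w̄_{kl}`. -/
def dwbar (p r : ℕ) (f : RSpace p r → ℂ) (x : RSpace p r) (k : Fin r) (l : Fin p) : ℂ :=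
  (fderiv ℝ f x (e2 p r k l) + Complex.I * fderiv ℝ f x (e3 p r k l)) / 2

/-- `τ(φ) = −4 Σ_{k,l≤p} ∂²φ/∂a∂b + 4 Σ_{k≤r,l≤p} ∂²φ/∂w∂w̄`. -/
def tauR (p r : ℕ) (f : RSpace p r → ℂ) (x : RSpace p r) : ℂ :=
  (-4 : ℂ) * ∑ k : Fin p, ∑ l : Fin p, da p r (fun y => db p r f y k l) x k l
    + 4 * ∑ k : Fin r, ∑ l : Fin p, dw p r (fun y => dwbar p r f y k l) x k l

/-- the corresponding bilinear operator `κ`. -/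
def kapR (p r : ℕ) (f g : RSpace p r → ℂ) (x : RSpace p r) : ℂ :=
  (-2 : ℂ) * ∑ k : Fin p, ∑ l : Fin p,
      (da p r f x k l * db p r g x k l + db p r f x k l * da p r g x k l)
    + 2 * ∑ k : Fin r, ∑ l : Fin p,
      (dw p r f x k l * dwbar p r g x k l + dwbar p r f x k l * dw p r g x k l)

/-- the block matrix `A = X₀ − X₁` (complexified). -/
def matA (p r : ℕ) (x : RSpace p r) : Matrix (Fin p) (Fin p) ℂ :=
  fun k l => ((x.1 k l - x.2.1 k l : ℝ) : ℂ)
def matB (p r : ℕ) (x : RSpace p r) : Matrix (Fin p) (Fin p) ℂ :=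
  fun k l => ((x.1 k l + x.2.1 k l : ℝ) : ℂ)
def matW (p r : ℕ) (x : RSpace p r) : Matrix (Fin r) (Fin p) ℂ :=
  fun k l => (x.2.2.1 k l : ℂ) + Complex.I * (x.2.2.2 k l : ℂ)
def matWbar (p r : ℕ) (x : RSpace p r) : Matrix (Fin r) (Fin p) ℂ :=
  fun k l => (x.2.2.1 k l : ℂ) - Complex.I * (x.2.2.2 k l : ℂ)

/-- `I_{pr} = diag(−I_p, I_r)`. -/
def Ipr (p r : ℕ) : Matrix (Fin p ⊕ Fin r) (Fin p ⊕ Fin r) ℂ :=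
  Matrix.fromBlocks (-1) 0 0 1

/-- `Φ̂(X) = (A; W) + M̂ (B; W̄)`. -/
def PhiHat (p r : ℕ) (M : Matrix (Fin p ⊕ Fin r) (Fin p ⊕ Fin r) ℂ) (x : RSpace p r) :
    Matrix (Fin p ⊕ Fin r) (Fin p) ℂ :=
  Matrix.fromRows (matA p r x) (matW p r x)
    + M * Matrix.fromRows (matB p r x) (matWbar p r x)

theorem fderiv_linearMap_apply {𝕜 E F : Type*} [NontriviallyNormedField 𝕜] [CompleteSpace 𝕜]
    [NormedAddCommGroup E] [NormedSpace 𝕜 E] [FiniteDimensional 𝕜 E]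
    [NormedAddCommGroup F] [NormedSpace 𝕜 F] (f : E →ₗ[𝕜] F) (x v : E) :
    fderiv 𝕜 f x v = f v := by
  rw [← LinearMap.coe_toContinuousLinearMap', (LinearMap.toContinuousLinearMap f).fderiv]

section

variable (p r : ℕ)

theorem da_const (c : ℂ) (x : RSpace p r) (k l : Fin p) : da p r (fun _ => c) x k l = 0 := by
  simp [da]

theorem dw_const (c : ℂ) (x : RSpace p r) (k : Fin r) (l : Fin p) :
    dw p r (fun _ => c) x k l = 0 := by
  simp [dw]

theorem Ipr_mul_Ipr : Ipr p r * Ipr p r = 1 := by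
  simp [Ipr, Matrix.fromBlocks_multiply, ← Matrix.fromBlocks_one]

theorem Ipr_eq_diagonal : Ipr p r = Matrix.diagonal (Sum.elim (fun _ => -1) fun _ => 1) := by
  simp [Ipr, ← Matrix.fromBlocks_diagonal, ← Matrix.diagonal_neg]

variable (M : Matrix (Fin p ⊕ Fin r) (Fin p ⊕ Fin r) ℂ)

theorem mul_Ipr_add_Ipr_mul_transpose_eq_zero (hM : Mᵀ * Ipr p r + Ipr p r * M = 0) :
    M * Ipr p r + Ipr p r * Mᵀ = 0 := by
  have h := congrArg (fun N => Ipr p r * N * Ipr p r) hM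
  simp only [Matrix.mul_add, Matrix.add_mul, ← Matrix.mul_assoc, Ipr_mul_Ipr, Matrix.one_mul,
    Matrix.mul_zero, Matrix.zero_mul] at h
  simpa only [Matrix.mul_assoc, Ipr_mul_Ipr, Matrix.mul_one, add_comm] using h

def PhiHat.linearMap : RSpace p r →ₗ[ℝ] Matrix (Fin p ⊕ Fin r) (Fin p) ℂ where
  toFun := PhiHat p r M
  map_add' y z := by
    ext (i | i) j <;>
    simp [PhiHat, matA, matB, matW, matWbar, Matrix.mul_apply, Fintype.sum_sum_type, mul_add,
      mul_sub, Finset.sum_add_distrib, Finset.sum_sub_distrib] <;> ring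
  map_smul' c y := by
    ext (i | i) j <;>
    simp [PhiHat, matA, matB, matW, matWbar, Matrix.mul_apply, Fintype.sum_sum_type,
      Complex.real_smul, Finset.mul_sum, mul_add, mul_sub, mul_left_comm _ (c : ℂ)]

variable (i : Fin p ⊕ Fin r) (j : Fin p)

theorem fderiv_PhiHat_apply (x v : RSpace p r) :
    fderiv ℝ (fun y => PhiHat p r M y i j) x v = PhiHat p r M v i j :=
  fderiv_linearMap_apply (Matrix.entryLinearMap ℝ ℂ i j ∘ₗ PhiHat.linearMap p r M) x v

theorem PhiHat_e0_apply (k l : Fin p) :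
    PhiHat p r M (e0 p r k l) i j =
      (if i = Sum.inl k ∧ j = l then 1 else 0) + M i (Sum.inl k) * if j = l then 1 else 0 := by
  rcases i with a | a <;>
    simp [PhiHat, Matrix.mul_apply, Fintype.sum_sum_type, e0, bR, matA, matB, matW, matWbar,
      ite_and, apply_ite (fun t : ℝ => (t : ℂ))]

theorem PhiHat_e1_apply (k l : Fin p) :
    PhiHat p r M (e1 p r k l) i j =
      -(if i = Sum.inl k ∧ j = l then 1 else 0) + M i (Sum.inl k) * if j = l then 1 else 0 := by
  rcases i with a | a <;>
    simp [PhiHat, Matrix.mul_apply, Fintype.sum_sum_type, e1, bR, matA, matB, matW, matWbar,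
      ite_and, apply_ite (fun t : ℝ => (t : ℂ))]

theorem PhiHat_e2_apply (k : Fin r) (l : Fin p) :
    PhiHat p r M (e2 p r k l) i j =
      (if i = Sum.inr k ∧ j = l then 1 else 0) + M i (Sum.inr k) * if j = l then 1 else 0 := by
  rcases i with a | a <;>
    simp [PhiHat, Matrix.mul_apply, Fintype.sum_sum_type, e2, bR, matA, matB, matW, matWbar,
      ite_and, apply_ite (fun t : ℝ => (t : ℂ))]

theorem PhiHat_e3_apply (k : Fin r) (l : Fin p) :
    PhiHat p r M (e3 p r k l) i j =
      I * (if i = Sum.inr k ∧ j = l then 1 else 0) -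
        I * M i (Sum.inr k) * if j = l then 1 else 0 := by
  rcases i with a | a <;>
    simp [PhiHat, Matrix.mul_apply, Fintype.sum_sum_type, e3, bR, matA, matB, matW, matWbar,
      ite_and, apply_ite (fun t : ℝ => (t : ℂ)), mul_comm _ I, sub_eq_add_neg]

variable (x : RSpace p r)

theorem da_PhiHat (k l : Fin p) :
    da p r (fun y => PhiHat p r M y i j) x k l = if i = Sum.inl k ∧ j = l then 1 else 0 := by
  rw [da, fderiv_PhiHat_apply, fderiv_PhiHat_apply, PhiHat_e0_apply, PhiHat_e1_apply]
  ring

theorem db_PhiHat (k l : Fin p) :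
    db p r (fun y => PhiHat p r M y i j) x k l = M i (Sum.inl k) * if j = l then 1 else 0 := by
  rw [db, fderiv_PhiHat_apply, fderiv_PhiHat_apply, PhiHat_e0_apply, PhiHat_e1_apply]
  ring

theorem dw_PhiHat (k : Fin r) (l : Fin p) :
    dw p r (fun y => PhiHat p r M y i j) x k l = if i = Sum.inr k ∧ j = l then 1 else 0 := by
  rw [dw, fderiv_PhiHat_apply, fderiv_PhiHat_apply, PhiHat_e2_apply, PhiHat_e3_apply]
  linear_combination ((M i (Sum.inr k) * (if j = l then 1 else 0)
    - (if i = Sum.inr k ∧ j = l then (1:ℂ) else 0)) / 2) * Complex.I_sq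

theorem dwbar_PhiHat (k : Fin r) (l : Fin p) :
    dwbar p r (fun y => PhiHat p r M y i j) x k l = M i (Sum.inr k) * if j = l then 1 else 0 := by
  rw [dwbar, fderiv_PhiHat_apply, fderiv_PhiHat_apply, PhiHat_e2_apply, PhiHat_e3_apply]
  linear_combination (((if i = Sum.inr k ∧ j = l then (1:ℂ) else 0)
    - M i (Sum.inr k) * (if j = l then 1 else 0)) / 2) * Complex.I_sq

theorem tauR_PhiHat : tauR p r (fun y => PhiHat p r M y i j) x = 0 := by
  simp [tauR, db_PhiHat, dwbar_PhiHat, da_const, dw_const]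

theorem kapR_PhiHat (i' : Fin p ⊕ Fin r) (j' : Fin p) :
    kapR p r (fun y => PhiHat p r M y i j) (fun y => PhiHat p r M y i' j') x =
      2 * (if j = j' then 1 else 0) * (M * Ipr p r + Ipr p r * Mᵀ) i i' := by
  simp only [kapR, da_PhiHat, db_PhiHat, dw_PhiHat, dwbar_PhiHat, Ipr_eq_diagonal,
    Matrix.add_apply, Matrix.mul_diagonal, Matrix.diagonal_mul, Matrix.transpose_apply]
  by_cases hj : j = j'
  · subst hj
    rcases i with a | a <;> rcases i' with b | b <;> simp [ite_and, Finset.sum_add_distrib] <;> ring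
  · simp [hj, ite_and, Finset.sum_add_distrib]

end

/-- if `M̂` lies in the complexification of `𝔰𝔬(p,r)`, then the components of
`Φ̂(X) = (A;W) + M̂(B;W̄)` form an orthogonal harmonic family:
`τ(φ) = 0` and `κ(φ,ψ) = 0` for any two components `φ, ψ` of `Φ̂`. -/
theorem stmt7 (p r : ℕ) (M : Matrix (Fin p ⊕ Fin r) (Fin p ⊕ Fin r) ℂ)
    (hM : Mᵀ * Ipr p r + Ipr p r * M = 0)
    (i i' : Fin p ⊕ Fin r) (j j' : Fin p) (x : RSpace p r) :
    tauR p r (fun y => PhiHat p r M y i j) x = 0 ∧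
    kapR p r (fun y => PhiHat p r M y i j) (fun y => PhiHat p r M y i' j') x = 0 := by
  refine ⟨tauR_PhiHat p r M i j x, ?_⟩
  rw [kapR_PhiHat, mul_Ipr_add_Ipr_mul_transpose_eq_zero p r M hM, Matrix.zero_apply, mul_zero]

end
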